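/- With M_n := (1 − l_n)^{−1} for nonzero integers n, the first and second discrete differences of the sequence (M_n) satisfy: sup |n|·|M_{n+1} − M_n| < ∞, where the supremum is over all integers n with n ≠ 0 and n+1 ≠ 0, and sup |n|²·|M_{n+2} − 2·M_{n+1} + M_n| < ∞, where the supremum is over all integers n with n, n+1, n+2 all nonzero. -/

import Mathlib

/-!
The reflection `n ↦ -n` conjugates `l_n`, hence `M_n`, so differences at negative indices have
the same size as mirrored ones at positive indices. For `n > 0` put `t = R^{-2n} ∈ (0, 1]`; then
`M_n = (Θ̄_o + t Θ_o) / ((Θ̄_o + Θ_i) + t (Θ_o - Θ_i))`, a Möbius function of `t` whose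
denominator has real part `α_o (1 + t) + α_i (1 - t) ≥ α_o`. It is therefore Lipschitz in `t`,
so `|M_{n+1} - M_n| = O(R^{-2n}) = O(4^{-n})`, which absorbs any polynomial weight; a second
difference is the difference of two first differences.
-/

open Complex Filter

/-- `Θ_i = α_i + i·β_i`. -/
noncomputable def Thi (αi βi : ℝ) : ℂ := (αi : ℂ) + (βi : ℂ) * Complex.I

/-- `Θ_o = α_o + i·β_o`. -/
noncomputable def Tho (αo βo : ℝ) : ℂ := (αo : ℂ) + (βo : ℂ) * Complex.I

/-- The multiplier `l_n` of equation (36A):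
`l_n = (1 − R^{2n})·|Θ_i|² / ((sign(n)·α_i − i·β_i)·(Θ_o + R^{2n}·Θ̄_o))`. -/
noncomputable def lseq (αi αo βi βo R : ℝ) (n : ℤ) : ℂ :=
  (((1 - R ^ (2 * n)) * ‖(Thi αi βi)‖ ^ 2 : ℝ) : ℂ) /
    (((n.sign : ℂ) * (αi : ℂ) - (βi : ℂ) * Complex.I) *
      (Tho αo βo + ((R ^ (2 * n) : ℝ) : ℂ) * (starRingEnd ℂ) (Tho αo βo)))

open ComplexConjugate

lemma norm_mobius_sub_le {𝕜 : Type*} [NormedField 𝕜] {a b c d s t : 𝕜} {m : ℝ} (hm : 0 < m)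
    (hs : m ≤ ‖c + s * d‖) (ht : m ≤ ‖c + t * d‖) :
    ‖(a + s * b) / (c + s * d) - (a + t * b) / (c + t * d)‖
      ≤ ‖b * c - a * d‖ / m ^ 2 * ‖s - t‖ := by
  have hs0 : c + s * d ≠ 0 := norm_pos_iff.mp (hm.trans_le hs)
  have ht0 : c + t * d ≠ 0 := norm_pos_iff.mp (hm.trans_le ht)
  rw [div_sub_div _ _ hs0 ht0, show (a + s * b) * (c + t * d) - (c + s * d) * (a + t * b)
    = (b * c - a * d) * (s - t) by ring, norm_div, norm_mul, norm_mul, div_mul_eq_mul_div,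
    div_le_div_iff₀ (by positivity) (by positivity), sq]
  gcongr

lemma sq_add_two_le_mul_zpow {R : ℝ} (hR : 2 ≤ R) {n : ℤ} (hn : 0 ≤ n) :
    ((n : ℝ) + 2) ^ 2 ≤ 4 * R ^ (2 * n) := by
  lift n to ℕ using hn
  have h2 : (n : ℝ) + 2 ≤ 2 ^ (n + 1) := by exact_mod_cast (Nat.lt_two_pow_self (n := n + 1))
  calc ((n : ℝ) + 2) ^ 2 ≤ (2 ^ (n + 1)) ^ 2 := by gcongr
    _ = 4 * (2 ^ 2) ^ n := by rw [← pow_mul, ← pow_mul]; ring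
    _ ≤ 4 * (R ^ 2) ^ n := by gcongr
    _ = 4 * R ^ (2 * (n : ℤ)) := by rw [zpow_mul, zpow_natCast, zpow_ofNat]

section ConjSymmetric

variable {M : ℤ → ℂ}

lemma norm_sub_of_conj_symm (hM : ∀ n, M (-n) = conj (M n)) (a b : ℤ) :
    ‖M (-a) - M (-b)‖ = ‖M a - M b‖ := by
  rw [hM, hM, ← map_sub, Complex.norm_conj]

lemma norm_second_diff_of_conj_symm (hM : ∀ n, M (-n) = conj (M n)) (m : ℤ) :
    ‖M (-(m + 2) + 2) - 2 * M (-(m + 2) + 1) + M (-(m + 2))‖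
      = ‖M (m + 2) - 2 * M (m + 1) + M m‖ := by
  rw [show -(m + 2) + 2 = -m by ring, show -(m + 2) + 1 = -(m + 1) by ring, hM, hM, hM,
    ← Complex.norm_conj (M (m + 2) - 2 * M (m + 1) + M m), map_add, map_sub, map_mul, map_ofNat]
  ring_nf

lemma norm_second_diff_le (n : ℤ) :
    ‖M (n + 2) - 2 * M (n + 1) + M n‖ ≤ ‖M (n + 1 + 1) - M (n + 1)‖ + ‖M (n + 1) - M n‖ := by
  rw [add_assoc n 1 1, one_add_one_eq_two,
    show M (n + 2) - 2 * M (n + 1) + M n = M (n + 2) - M (n + 1) - (M (n + 1) - M n) by ring]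
  exact norm_sub_le _ _

lemma weighted_second_diff_le {K : ℝ}
    (hK : ∀ n : ℤ, 0 < n → ((n : ℝ) + 2) ^ 2 * ‖M (n + 1) - M n‖ ≤ K) {n : ℤ} (hn : 0 < n) :
    ((n : ℝ) + 2) ^ 2 * ‖M (n + 2) - 2 * M (n + 1) + M n‖ ≤ 2 * K := by
  have h₁ := hK (n + 1) (by omega)
  have h₀ := hK n hn
  push_cast at h₁
  calc ((n : ℝ) + 2) ^ 2 * ‖M (n + 2) - 2 * M (n + 1) + M n‖
      ≤ ((n : ℝ) + 2) ^ 2 * (‖M (n + 1 + 1) - M (n + 1)‖ + ‖M (n + 1) - M n‖) := by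
        gcongr; exact norm_second_diff_le n
    _ ≤ ((n : ℝ) + 1 + 2) ^ 2 * ‖M (n + 1 + 1) - M (n + 1)‖
        + ((n : ℝ) + 2) ^ 2 * ‖M (n + 1) - M n‖ := by
        rw [mul_add]; gcongr; linarith
    _ ≤ 2 * K := by linarith

theorem bounded_weighted_diffs_of_conj_symm (hM : ∀ n, M (-n) = conj (M n)) {K : ℝ}
    (hK : ∀ n : ℤ, 0 < n → ((n : ℝ) + 2) ^ 2 * ‖M (n + 1) - M n‖ ≤ K) :
    (∃ C : ℝ, ∀ n : ℤ, n ≠ 0 → n + 1 ≠ 0 → (|n| : ℝ) * ‖M (n + 1) - M n‖ ≤ C)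
    ∧ ∃ C : ℝ, ∀ n : ℤ, n ≠ 0 → n + 1 ≠ 0 → n + 2 ≠ 0 →
      (|n| : ℝ) ^ 2 * ‖M (n + 2) - 2 * M (n + 1) + M n‖ ≤ C := by
  refine ⟨⟨K, fun n hn₀ hn₁ => ?_⟩, ⟨2 * K, fun n hn₀ hn₁ hn₂ => ?_⟩⟩
  · rcases lt_or_gt_of_ne hn₀ with hneg | hpos
    · obtain ⟨m, rfl⟩ : ∃ m, n = -(m + 1) := ⟨-n - 1, by ring⟩
      have hm : 0 < m := by omega
      have hm' : (0 : ℝ) < m := by exact_mod_cast hm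
      calc |((-(m + 1) : ℤ) : ℝ)| * ‖M (-(m + 1) + 1) - M (-(m + 1))‖
          = ((m : ℝ) + 1) * ‖M (m + 1) - M m‖ := by
            rw [show -(m + 1) + 1 = -m by ring, norm_sub_of_conj_symm hM, norm_sub_rev]
            push_cast
            rw [abs_neg, abs_of_pos (by linarith)]
        _ ≤ ((m : ℝ) + 2) ^ 2 * ‖M (m + 1) - M m‖ := by gcongr; nlinarith
        _ ≤ K := hK m hm
    · have hn : (0 : ℝ) < n := by exact_mod_cast hpos
      calc (|n| : ℝ) * ‖M (n + 1) - M n‖ ≤ ((n : ℝ) + 2) ^ 2 * ‖M (n + 1) - M n‖ := by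
            gcongr; rw [abs_of_pos hn]; nlinarith
        _ ≤ K := hK n hpos
  · rcases lt_or_gt_of_ne hn₀ with hneg | hpos
    · obtain ⟨m, rfl⟩ : ∃ m, n = -(m + 2) := ⟨-n - 2, by ring⟩
      have hm : 0 < m := by omega
      have hm' : (0 : ℝ) < m := by exact_mod_cast hm
      calc |((-(m + 2) : ℤ) : ℝ)| ^ 2 * ‖M (-(m + 2) + 2) - 2 * M (-(m + 2) + 1) + M (-(m + 2))‖
          = ((m : ℝ) + 2) ^ 2 * ‖M (m + 2) - 2 * M (m + 1) + M m‖ := by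
            rw [norm_second_diff_of_conj_symm hM]
            push_cast
            rw [abs_neg, abs_of_pos (by linarith)]
        _ ≤ 2 * K := weighted_second_diff_le hK hm
    · have hn : (0 : ℝ) < n := by exact_mod_cast hpos
      calc (|n| : ℝ) ^ 2 * ‖M (n + 2) - 2 * M (n + 1) + M n‖
          ≤ ((n : ℝ) + 2) ^ 2 * ‖M (n + 2) - 2 * M (n + 1) + M n‖ := by
            gcongr; rw [abs_of_pos hn]; linarith
        _ ≤ 2 * K := weighted_second_diff_le hK hpos

end ConjSymmetric

noncomputable def Mseq (αi αo βi βo R : ℝ) (n : ℤ) : ℂ := (1 - lseq αi αo βi βo R n)⁻¹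

section Multiplier

variable {αi αo βi βo R : ℝ}

lemma lseq_neg (hR : R ≠ 0) (n : ℤ) :
    lseq αi αo βi βo R (-n) = conj (lseq αi αo βi βo R n) := by
  have hx : R ^ (2 * -n) = (R ^ (2 * n))⁻¹ := by rw [mul_neg, zpow_neg]
  have hx0 : ((R ^ (2 * n) : ℝ) : ℂ) ≠ 0 := by exact_mod_cast zpow_ne_zero _ hR
  rw [lseq, lseq, hx, map_div₀, conj_ofReal]
  -- the numerator and denominator of `l_{-n}` are those of `conj l_n` times `-R^{-2n}`
  conv_rhs => rw [← mul_div_mul_left _ _ (neg_ne_zero.mpr (inv_ne_zero hx0))]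
  simp only [Int.sign_neg, Int.cast_neg, map_mul, map_sub, map_add, map_intCast, conj_ofReal,
      conj_I, Complex.conj_conj, Complex.ofReal_mul, Complex.ofReal_sub, Complex.ofReal_one,
      Complex.ofReal_inv]
  generalize ((R ^ (2 * n) : ℝ) : ℂ) = x at hx0 ⊢
  congr 1 <;> field_simp <;> ring

lemma le_norm_Mseq_denom (hαi : 0 ≤ αi) (hαo : 0 ≤ αo) {t : ℝ} (ht₀ : 0 ≤ t) (ht₁ : t ≤ 1) :
    αo ≤ ‖conj (Tho αo βo) + Thi αi βi + t * (Tho αo βo - Thi αi βi)‖ :=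
  calc αo ≤ αo * (1 + t) + αi * (1 - t) := by nlinarith
    _ = (conj (Tho αo βo) + Thi αi βi + t * (Tho αo βo - Thi αi βi)).re := by
        simp [Tho, Thi]; ring
    _ ≤ _ := Complex.re_le_norm _

lemma Mseq_eq_of_pos (hαi : 0 < αi) (hαo : 0 < αo) (hR : 0 < R) {n : ℤ} (hn : 0 < n) :
    Mseq αi αo βi βo R n =
      (conj (Tho αo βo) + ((R ^ (2 * n))⁻¹ : ℝ) * Tho αo βo) /
        (conj (Tho αo βo) + Thi αi βi + ((R ^ (2 * n))⁻¹ : ℝ) * (Tho αo βo - Thi αi βi)) := by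
  have hsign : ((n.sign : ℂ) * αi - βi * I) = conj (Thi αi βi) := by
    rw [Int.sign_eq_one_of_pos hn]; simp [Thi, sub_eq_add_neg]
  have hΘi : conj (Thi αi βi) ≠ 0 := fun h => by
    have := congrArg Complex.re h
    simp [Thi] at this
    linarith
  have hx₀ : 0 < R ^ (2 * n) := zpow_pos hR _
  rw [Mseq, lseq, hsign, Complex.ofReal_mul, Complex.ofReal_pow, ← Complex.mul_conj']
  generalize R ^ (2 * n) = x at hx₀ ⊢
  have hD : Tho αo βo + x * conj (Tho αo βo) ≠ 0 := fun h => by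
    have := congrArg Complex.re h
    simp [Tho] at this
    nlinarith
  have hx : (x : ℂ) ≠ 0 := by exact_mod_cast hx₀.ne'
  rw [inv_eq_iff_eq_inv, inv_div]
  push_cast
  have hnum : conj (Tho αo βo) + (x : ℂ)⁻¹ * Tho αo βo ≠ 0 := by
    rw [show conj (Tho αo βo) + (x : ℂ)⁻¹ * Tho αo βo
      = (x : ℂ)⁻¹ * (Tho αo βo + x * conj (Tho αo βo)) by field_simp; ring]
    exact mul_ne_zero (inv_ne_zero hx) hD
  rw [eq_div_iff hnum]
  field_simp
  ring

lemma Mseq_neg (hR : R ≠ 0) (n : ℤ) :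
    Mseq αi αo βi βo R (-n) = conj (Mseq αi αo βi βo R n) := by
  rw [Mseq, Mseq, lseq_neg hR, map_inv₀, map_sub, map_one]

lemma norm_Mseq_succ_sub_le (hαi : 0 < αi) (hαo : 0 < αo) (hR : 1 ≤ R) {n : ℤ} (hn : 0 < n) :
    ‖Mseq αi αo βi βo R (n + 1) - Mseq αi αo βi βo R n‖
      ≤ 2 * ‖Thi αi βi‖ / αo * (R ^ (2 * n))⁻¹ := by
  have hR₀ : 0 < R := one_pos.trans_le hR
  have ht : (R ^ (2 * (n + 1)))⁻¹ ≤ (R ^ (2 * n))⁻¹ :=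
    inv_anti₀ (zpow_pos hR₀ _) (zpow_le_zpow_right₀ hR (by omega))
  have hdet : Tho αo βo * (conj (Tho αo βo) + Thi αi βi)
      - conj (Tho αo βo) * (Tho αo βo - Thi αi βi) = (2 * αo : ℝ) * Thi αi βi := by
    apply Complex.ext <;> simp [Tho, Thi] <;> ring
  rw [Mseq_eq_of_pos hαi hαo hR₀ (by omega), Mseq_eq_of_pos hαi hαo hR₀ hn]
  have hden (k : ℤ) (hk : 0 < k) := le_norm_Mseq_denom (βi := βi) (βo := βo)
    (t := (R ^ (2 * k))⁻¹) hαi.le hαo.le (by positivity)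
    (inv_le_one_of_one_le₀ (one_le_zpow₀ hR (by omega)))
  refine (norm_mobius_sub_le hαo (hden (n + 1) (by omega)) (hden n hn)).trans ?_
  rw [hdet, norm_mul, Complex.norm_real, Real.norm_of_nonneg (by positivity), ← Complex.ofReal_sub,
    Complex.norm_real, Real.norm_eq_abs]
  have hstep : |(R ^ (2 * (n + 1)))⁻¹ - (R ^ (2 * n))⁻¹| ≤ (R ^ (2 * n))⁻¹ :=
    abs_sub_le_of_nonneg_of_le (by positivity) ht (by positivity) le_rfl
  calc 2 * αo * ‖Thi αi βi‖ / αo ^ 2 * |(R ^ (2 * (n + 1)))⁻¹ - (R ^ (2 * n))⁻¹|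
      ≤ 2 * αo * ‖Thi αi βi‖ / αo ^ 2 * (R ^ (2 * n))⁻¹ := by gcongr
    _ = 2 * ‖Thi αi βi‖ / αo * (R ^ (2 * n))⁻¹ := by field_simp

lemma sq_mul_norm_Mseq_succ_sub_le (hαi : 0 < αi) (hαo : 0 < αo) (hR : 2 ≤ R) {n : ℤ}
    (hn : 0 < n) :
    ((n : ℝ) + 2) ^ 2 * ‖Mseq αi αo βi βo R (n + 1) - Mseq αi αo βi βo R n‖
      ≤ 8 * ‖Thi αi βi‖ / αo := by
  have hx : 0 < R ^ (2 * n) := zpow_pos (by linarith) _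
  calc ((n : ℝ) + 2) ^ 2 * ‖Mseq αi αo βi βo R (n + 1) - Mseq αi αo βi βo R n‖
      ≤ 4 * R ^ (2 * n) * (2 * ‖Thi αi βi‖ / αo * (R ^ (2 * n))⁻¹) := by
        gcongr
        · exact sq_add_two_le_mul_zpow hR hn.le
        · exact norm_Mseq_succ_sub_le hαi hαo (by linarith) hn
    _ = 8 * ‖Thi αi βi‖ / αo := by field_simp; ring

end Multiplier

theorem statement6_general (αi αo βi βo R : ℝ)
    (hαi : 0 < αi) (hαo : 0 < αo) (hR : 2 ≤ R) :
    (∃ C : ℝ, ∀ n : ℤ, n ≠ 0 → n + 1 ≠ 0 →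
      (|n| : ℝ) * ‖((1 - lseq αi αo βi βo R (n + 1))⁻¹
        - (1 - lseq αi αo βi βo R n)⁻¹)‖ ≤ C)
    ∧ ∃ C : ℝ, ∀ n : ℤ, n ≠ 0 → n + 1 ≠ 0 → n + 2 ≠ 0 →
      (|n| : ℝ) ^ 2 * ‖((1 - lseq αi αo βi βo R (n + 2))⁻¹
        - 2 * (1 - lseq αi αo βi βo R (n + 1))⁻¹
        + (1 - lseq αi αo βi βo R n)⁻¹)‖ ≤ C :=
  bounded_weighted_diffs_of_conj_symm (Mseq_neg (by linarith))
    fun _ hn => sq_mul_norm_Mseq_succ_sub_le hαi hαo hR hn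

/-- With `M_n := (1 − l_n)⁻¹`, the first and second discrete differences
satisfy `sup |n|·|M_{n+1} − M_n| < ∞` (over `n` with `n ≠ 0`, `n+1 ≠ 0`) and
`sup |n|²·|M_{n+2} − 2M_{n+1} + M_n| < ∞` (over `n` with `n, n+1, n+2 ≠ 0`). -/
theorem statement6 (αi αo βi βo R : ℝ)
    (hαi : 0 < αi) (hαo : 0 < αo) (hβi : 0 ≤ βi) (hβo : 0 ≤ βo) (hR : 2 ≤ R) :
    (∃ C : ℝ, ∀ n : ℤ, n ≠ 0 → n + 1 ≠ 0 →
      (|n| : ℝ) * ‖((1 - lseq αi αo βi βo R (n + 1))⁻¹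
        - (1 - lseq αi αo βi βo R n)⁻¹)‖ ≤ C)
    ∧ ∃ C : ℝ, ∀ n : ℤ, n ≠ 0 → n + 1 ≠ 0 → n + 2 ≠ 0 →
      (|n| : ℝ) ^ 2 * ‖((1 - lseq αi αo βi βo R (n + 2))⁻¹
        - 2 * (1 - lseq αi αo βi βo R (n + 1))⁻¹
        + (1 - lseq αi αo βi βo R n)⁻¹)‖ ≤ C :=
  statement6_general αi αo βi βo R hαi hαo hR
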